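/- Let P(A,b,B) be an even polynomial in the variables a_1,...,a_n, b, b_1,...,b_k. Then the function S_{b,B}[P](A,N) := Σ_{b,b_1,...,b_k ≥ 1, b + Σb_i = N} P(A,b,B)·∏b_i + (1/2) Σ_{b_1,...,b_k ≥ 1, Σb_i = N} P(A,0,B)·∏b_i is an even polynomial in (a_1,...,a_n, N). -/

import Mathlib

/-!
Expanding `P` into monomials `a^α b^β ∏ bᵢ^γᵢ`, each contributes `a^α · W(N)` with
`W(N) = ∑ b^β ∏ bᵢ^(γᵢ+1)` over `b + ∑ bᵢ = N`, `bᵢ ≥ 1`, where the terms with `b = 0` carry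
weight `1/2`. This weighting makes `W` a trapezoidal convolution
`∑_{m=0}^{N} m^β F(N-m) - (0^β F(N) + N^β F(0))/2` of `m ↦ m^β` with the analogous sum `F` over
the `bᵢ` alone, and `F` is itself an iterated trapezoidal convolution.

The trapezoidal sum `T(N) = ∑_{m=0}^{N} f(m) - (f(0) + f(N))/2` of a polynomial `f` of parity `d`
is a polynomial of parity `d + 1`: both `T(-x)` and `(-1)^(d+1) T(x)` solve
`G(x+1) - G(x) = (-1)^(d+1) (f(x) + f(x+1))/2` with `G(0) = 0`. Expanding `F(N-m)` in powers of `N`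
reduces convolutions to trapezoidal sums, so each convolution with `m^j` adds `j + 1` to the
parity. Hence `W` has parity `β + ∑γᵢ + 2k`, and each monomial contributes a polynomial whose
parity is that of its (even) total degree.
-/

open MvPolynomial

/-- The sum `S_{b,B}[P](A,N)`: variables are indexed by `Fin n ⊕ (Unit ⊕ Fin k)`, with the
`Fin n` part the variables `a₁,...,aₙ`, the `Unit` part the variable `b`, and the `Fin k` part
the variables `b₁,...,b_k`. -/
noncomputable def Ssum (n k : ℕ) (P : MvPolynomial (Fin n ⊕ (Unit ⊕ Fin k)) ℂ)
    (A : Fin n → ℂ) (N : ℕ) : ℂ :=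
  (∑ t ∈ (Finset.Nat.antidiagonalTuple (k + 1) N).filter fun t => ∀ i, 1 ≤ t i,
      MvPolynomial.eval
        (Sum.elim A (Sum.elim (fun _ => ((t 0 : ℂ))) fun i => ((t i.succ : ℂ)))) P *
        ∏ i : Fin k, (t i.succ : ℂ)) +
    (1 / 2 : ℂ) *
      ∑ t ∈ (Finset.Nat.antidiagonalTuple k N).filter fun t => ∀ i, 1 ≤ t i,
        MvPolynomial.eval (Sum.elim A (Sum.elim (fun _ => (0 : ℂ)) fun i => ((t i : ℂ)))) P *
          ∏ i : Fin k, (t i : ℂ)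

open Finset

section Trapezoid

variable {K : Type*} [Field K]

def trapezoidSum (f : ℕ → K) (N : ℕ) : K :=
  ∑ m ∈ range (N + 1), f m - (f 0 + f N) / 2

theorem trapezoidSum_sum_mul {ι : Type*} (s : Finset ι) (c : ι → K) (f : ι → ℕ → K) (N : ℕ) :
    trapezoidSum (fun m => ∑ i ∈ s, c i * f i m) N = ∑ i ∈ s, c i * trapezoidSum (f i) N := by
  simp only [trapezoidSum, mul_sub, mul_div_assoc', mul_add, Finset.mul_sum, sum_sub_distrib,
    ← sum_div, sum_add_distrib]
  rw [sum_comm]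

theorem trapezoidSum_congr {f g : ℕ → K} {N : ℕ} (h : ∀ m ≤ N, f m = g m) :
    trapezoidSum f N = trapezoidSum g N := by
  have hfg : ∀ m ∈ range (N + 1), f m = g m := fun m hm => h m (mem_range_succ_iff.mp hm)
  rw [trapezoidSum, trapezoidSum, sum_congr rfl hfg, h 0 N.zero_le, h N le_rfl]

def trapezoidConv (j : ℕ) (F : ℕ → K) (N : ℕ) : K :=
  trapezoidSum (fun m => (m : K) ^ j * F (N - m)) N

end Trapezoid

namespace Polynomial

variable {R : Type*} [CommRing R]

def HasParity (d : ℕ) (p : R[X]) : Prop :=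
  p.comp (-X) = C ((-1) ^ d) * p

theorem hasParity_iff_coeff {d : ℕ} {p : R[X]} :
    HasParity d p ↔ ∀ l, (-1) ^ l * p.coeff l = (-1) ^ d * p.coeff l := by
  rw [HasParity, show (-X : R[X]) = C (-1) * X by simp, Polynomial.ext_iff]
  simp only [comp_C_mul_X_coeff, coeff_C_mul, mul_comm (p.coeff _)]

theorem hasParity_X_pow (d : ℕ) : HasParity d (X ^ d : R[X]) := by
  rw [HasParity, X_pow_comp, neg_pow, C_pow, C_neg, C_1]

namespace HasParity

variable {d e : ℕ} {p q : R[X]}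

theorem eval (hp : HasParity d p) (x : R) : p.eval (-x) = (-1) ^ d * p.eval x := by
  simpa using congrArg (Polynomial.eval x) hp

theorem of_even_iff (hp : HasParity d p) (h : Even d ↔ Even e) : HasParity e p := by
  rwa [HasParity, ← neg_one_pow_congr h]

theorem mul (hp : HasParity d p) (hq : HasParity e q) : HasParity (d + e) (p * q) := by
  rw [HasParity, mul_comp, hp, hq, pow_add, C_mul]
  ring

theorem C_mul (hp : HasParity d p) (a : R) : HasParity d (C a * p) := by
  rw [HasParity, mul_comp, C_comp, hp]
  ring

theorem sum {ι : Type*} {s : Finset ι} {f : ι → R[X]} (hf : ∀ i ∈ s, HasParity d (f i)) :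
    HasParity d (∑ i ∈ s, f i) := by
  rw [HasParity, sum_comp, Finset.mul_sum]
  exact Finset.sum_congr rfl hf

theorem hasseDeriv (hp : HasParity d p) (i : ℕ) : HasParity (d + i) (hasseDeriv i p) := by
  rw [hasParity_iff_coeff] at hp ⊢
  intro l
  have hsq : (-1 : R) ^ i * (-1) ^ i = 1 := by rw [← mul_pow, neg_one_mul, neg_neg, one_pow]
  rw [hasseDeriv_coeff, pow_add]
  linear_combination (-1) ^ i * ((l + i).choose i : R) * hp (l + i) +
    (-((l + i).choose i * p.coeff (l + i) * (-1) ^ l : R)) * hsq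

end HasParity

theorem eval_sub_eq_sum_hasseDeriv (v : R[X]) (x y : R) :
    v.eval (x - y) = ∑ i ∈ range (v.natDegree + 1), (-y) ^ i * (hasseDeriv i v).eval x := by
  rw [sub_eq_neg_add, ← taylor_eval,
    eval_eq_sum_range' (n := v.natDegree + 1) (by rw [natDegree_taylor]; omega)]
  simp only [taylor_coeff, mul_comm]

section CharZero

variable {K : Type*} [Field K] [CharZero K]

theorem eq_of_forall_eval_natCast_eq {p q : K[X]} (h : ∀ n : ℕ, p.eval (n : K) = q.eval (n : K)) :
    p = q :=
  eq_of_infinite_eval_eq p q (Set.infinite_of_injective_forall_mem Nat.cast_injective h)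

theorem eq_of_eval_add_one_sub_eq {F G : K[X]}
    (h : ∀ n : ℕ, F.eval ((n : K) + 1) - F.eval (n : K) = G.eval ((n : K) + 1) - G.eval (n : K))
    (h0 : F.eval 0 = G.eval 0) : F = G := by
  refine eq_of_forall_eval_natCast_eq fun n => ?_
  induction n with
  | zero => simpa using h0
  | succ n ih => push_cast; linear_combination h n + ih

theorem exists_eval_natCast_eq_sum_range (f : K[X]) :
    ∃ F : K[X], ∀ N : ℕ, F.eval (N : K) = ∑ m ∈ range N, f.eval (m : K) := by
  induction f using Polynomial.induction_on' with
  | add f g hf hg =>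
    obtain ⟨F, hF⟩ := hf
    obtain ⟨G, hG⟩ := hg
    exact ⟨F + G, fun N => by simp [hF, hG, sum_add_distrib]⟩
  | monomial d a =>
    -- Faulhaber's formula: `(d + 1) ∑_{m < N} m ^ d = B_{d+1}(N) - B_{d+1}(0)`
    refine ⟨C (a / (d + 1)) * ((bernoulli (d + 1)).map (algebraMap ℚ K) -
      C (algebraMap ℚ K (_root_.bernoulli (d + 1)))), fun N => ?_⟩
    have h := congrArg (algebraMap ℚ K) (sum_range_pow_eq_bernoulli_sub N d)
    simp only [map_mul, map_sum, map_pow, map_natCast, map_sub, map_add, map_one] at h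
    simp only [eval_mul, eval_C, eval_sub, eval_natCast_map, eval_monomial, ← Finset.mul_sum, ← h]
    field_simp

theorem exists_hasParity_trapezoidSum {d : ℕ} {f : K[X]} (hf : HasParity d f) :
    ∃ F : K[X], HasParity (d + 1) F ∧
      ∀ N : ℕ, F.eval (N : K) = trapezoidSum (fun m => f.eval (m : K)) N := by
  obtain ⟨S, hS⟩ := exists_eval_natCast_eq_sum_range f
  set F := S + C (1 / 2) * f - C (f.eval 0 / 2)
  have hF : ∀ N : ℕ, F.eval (N : K) = trapezoidSum (fun m => f.eval (m : K)) N := by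
    intro N
    simp only [F, trapezoidSum, eval_sub, eval_add, eval_mul, eval_C, hS, sum_range_succ,
      Nat.cast_zero]
    ring
  have hstep : ∀ x : K, F.eval (x + 1) - F.eval x = (f.eval x + f.eval (x + 1)) / 2 := by
    have h : F.comp (X + 1) - F = C (1 / 2) * (f + f.comp (X + 1)) := by
      refine eq_of_forall_eval_natCast_eq fun n => ?_
      simp only [eval_sub, eval_comp, eval_add, eval_X, eval_one, eval_mul, eval_C]
      rw [← Nat.cast_succ, hF, hF]
      simp only [trapezoidSum, sum_range_succ, Nat.cast_succ]
      ring
    intro x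
    simpa [div_eq_inv_mul] using congrArg (eval x) h
  have hF0 : F.eval 0 = 0 := by
    simpa [trapezoidSum] using hF 0
  refine ⟨F, ?_, hF⟩
  -- `F (-x)` and `(-1) ^ (d + 1) * F x` solve the same difference equation and vanish at `0`
  refine eq_of_eval_add_one_sub_eq (fun n => ?_) (by simp [hF0])
  have hback := hstep (-(n : K) - 1)
  rw [sub_add_cancel, ← neg_add', hf.eval, hf.eval] at hback
  simp only [eval_comp, eval_neg, eval_X, eval_mul, eval_C, pow_succ]
  linear_combination (-1) * hback + (-1) ^ d * hstep n

end CharZero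

end Polynomial

def IsPolyOfParity {K : Type*} [Field K] (d : ℕ) (F : ℕ → K) : Prop :=
  ∃ p : Polynomial K, p.HasParity d ∧ ∀ N : ℕ, p.eval (N : K) = F N

open Polynomial in
theorem IsPolyOfParity.trapezoidConv {K : Type*} [Field K] [CharZero K] {d : ℕ} {F : ℕ → K}
    (hF : IsPolyOfParity d F) (j : ℕ) : IsPolyOfParity (j + d + 1) (trapezoidConv j F) := by
  obtain ⟨v, hv, hvF⟩ := hF
  choose T hTpar hTeval using fun i =>
    exists_hasParity_trapezoidSum ((hasParity_X_pow j).mul (hv.hasseDeriv i))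
  -- `v (N - m) = (-1) ^ d * v (m - N)`, expanded in powers of `N`
  refine ⟨∑ i ∈ range (v.natDegree + 1), Polynomial.C ((-1) ^ (d + i)) * (Polynomial.X ^ i * T i),
    ?_, fun N => ?_⟩
  · refine HasParity.sum fun i _ => (((hasParity_X_pow i).mul (hTpar i)).C_mul _).of_even_iff ?_
    simp only [Nat.even_iff]
    omega
  · simp only [Polynomial.eval_finsetSum, Polynomial.eval_mul, Polynomial.eval_C,
      Polynomial.eval_pow, Polynomial.eval_X, hTeval, ← mul_assoc, ← trapezoidSum_sum_mul,
      _root_.trapezoidConv]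
    refine trapezoidSum_congr fun m hm => ?_
    rw [← hvF, Nat.cast_sub hm, ← neg_sub, hv.eval, eval_sub_eq_sum_hasseDeriv, Finset.mul_sum,
      Finset.mul_sum]
    refine sum_congr rfl fun i _ => ?_
    rw [neg_pow, pow_add]
    ring

theorem Finset.Nat.sum_antidiagonalTuple_succ {M : Type*} [AddCommMonoid M] (k N : ℕ)
    (f : (Fin (k + 1) → ℕ) → M) :
    ∑ t ∈ Finset.Nat.antidiagonalTuple (k + 1) N, f t =
      ∑ p ∈ antidiagonal N, ∑ t ∈ Finset.Nat.antidiagonalTuple k p.2, f (Fin.cons p.1 t) := by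
  rw [show antidiagonal N = ⟨List.Nat.antidiagonal N, List.Nat.nodup_antidiagonal N⟩ from rfl]
  simp only [Finset.sum, Finset.Nat.antidiagonalTuple, Multiset.Nat.antidiagonalTuple,
    List.Nat.antidiagonalTuple, Multiset.map_coe, Multiset.sum_coe, List.flatMap_def,
    List.map_flatten, List.sum_flatten, List.map_map, Function.comp_def]

section Compositions

variable {R : Type*} [CommRing R]

def compositionPowSum {j : ℕ} (e : Fin j → ℕ) (N : ℕ) : R :=
  ∑ t ∈ (Finset.Nat.antidiagonalTuple j N).filter fun t => ∀ i, 1 ≤ t i, ∏ i, (t i : R) ^ e i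

theorem compositionPowSum_cons {k : ℕ} (e₀ : ℕ) (e : Fin k → ℕ) (N : ℕ) :
    (compositionPowSum (Fin.cons e₀ e) N : R) =
      ∑ m ∈ range (N + 1), (m : R) ^ e₀ * compositionPowSum e (N - m) -
        0 ^ e₀ * compositionPowSum e N := by
  simp only [compositionPowSum, sum_filter, Finset.Nat.sum_antidiagonalTuple_succ,
    Finset.Nat.sum_antidiagonal_eq_sum_range_succ_mk, Fin.forall_fin_succ, Fin.cons_zero,
    Fin.cons_succ, Fin.prod_univ_succ, Finset.mul_sum]
  rw [sum_range_succ', sum_range_succ']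
  simp

theorem compositionPowSum_zero {k : ℕ} (e : Fin (k + 1) → ℕ) :
    (compositionPowSum e 0 : R) = 0 := by
  rw [compositionPowSum, Finset.Nat.antidiagonalTuple_zero_right, filter_singleton,
    if_neg fun h => by simpa using h 0, sum_empty]

end Compositions

section CompositionParity

variable {K : Type*} [Field K] [CharZero K]

theorem compositionPowSum_cons_add_half {k : ℕ} (e₀ : ℕ) (e : Fin (k + 1) → ℕ) (N : ℕ) :
    (compositionPowSum (Fin.cons e₀ e) N : K) + 0 ^ e₀ * compositionPowSum e N / 2 =
      trapezoidConv e₀ (compositionPowSum e) N := by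
  rw [compositionPowSum_cons, trapezoidConv, trapezoidSum, Nat.sub_zero, Nat.sub_self,
    compositionPowSum_zero, Nat.cast_zero]
  ring

theorem isPolyOfParity_compositionPowSum {k : ℕ} (e : Fin (k + 1) → ℕ) (he : ∀ i, e i ≠ 0) :
    IsPolyOfParity (∑ i, e i + k) (compositionPowSum e : ℕ → K) := by
  induction k with
  | zero =>
    refine ⟨Polynomial.X ^ e 0, by simpa using Polynomial.hasParity_X_pow (e 0), fun N => ?_⟩
    rcases N with _ | N
    · simp [compositionPowSum_zero, he 0]
    · simp [compositionPowSum, filter_singleton]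
  | succ k ih =>
    have hconv : (compositionPowSum e : ℕ → K) =
        trapezoidConv (e 0) (compositionPowSum (Fin.tail e)) := by
      funext N
      rw [← compositionPowSum_cons_add_half, Fin.cons_self_tail, zero_pow (he 0)]
      ring
    have hdeg : ∑ i, e i + (k + 1) = e 0 + (∑ i, Fin.tail e i + k) + 1 := by
      rw [Fin.sum_univ_succ, Fin.tail_def]
      ring
    rw [hconv, hdeg]
    exact (ih (Fin.tail e) fun i => he i.succ).trapezoidConv (e 0)

end CompositionParity

namespace MvPolynomial

theorem eval_aeval_X {σ R : Type*} [CommRing R] (y : σ → R) (v : σ) (w : Polynomial R) :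
    eval y (Polynomial.aeval (X v) w) = w.eval (y v) := by
  have h := Polynomial.aeval_algHom_apply (aeval y) (X v) w
  rw [aeval_X] at h
  rw [← Polynomial.coe_aeval_eq_eval, h]
  rfl

theorem even_of_mem_support {σ K : Type*} [Fintype σ] [Field K] [CharZero K]
    {P : MvPolynomial σ K} (hP : ∀ x : σ → K, eval (fun v => -x v) P = eval x P)
    {s : σ →₀ ℕ} (hs : s ∈ P.support) : Even (∑ v, s v) := by
  classical
  have hflip : (∑ t ∈ P.support, monomial t ((-1) ^ (∑ v, t v) * coeff t P)) = P := by
    refine MvPolynomial.funext fun x => ?_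
    rw [← hP x, eval_eq' (fun v => -x v), map_sum]
    refine sum_congr rfl fun t _ => ?_
    rw [eval_monomial, Finsupp.prod_fintype _ _ fun _ => pow_zero _,
      prod_congr rfl fun v _ => neg_pow (x v) (t v), prod_mul_distrib, prod_pow_eq_pow_sum]
    ring
  have hcoeff := congrArg (coeff s) hflip
  rw [coeff_sum, sum_eq_single_of_mem s hs fun t _ hts => by rw [coeff_monomial, if_neg hts],
    coeff_monomial, if_pos rfl] at hcoeff
  refine (neg_one_pow_eq_one_iff_even (R := K) (by norm_num)).mp ?_
  exact mul_right_cancel₀ (mem_support_iff.mp hs) (by rw [hcoeff, one_mul])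

end MvPolynomial

theorem Ssum_sum {n k : ℕ} {ι : Type*} (s : Finset ι)
    (P : ι → MvPolynomial (Fin n ⊕ (Unit ⊕ Fin k)) ℂ) (A : Fin n → ℂ) (N : ℕ) : Ssum n k (∑ i ∈ s, P i) A N = ∑ i ∈ s, Ssum n k (P i) A N := by
  simp only [Ssum, map_sum, sum_mul, mul_sum, sum_add_distrib]
  congr 1 <;> exact sum_comm

theorem Ssum_monomial (n k : ℕ) (s : (Fin n ⊕ (Unit ⊕ Fin k)) →₀ ℕ) (c : ℂ) (A : Fin n → ℂ)
    (N : ℕ) :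
    Ssum n k (monomial s c) A N = c * (∏ i, A i ^ s (Sum.inl i)) *
      (compositionPowSum
          (Fin.cons (s (Sum.inr (Sum.inl ()))) fun i => s (Sum.inr (Sum.inr i)) + 1) N +
        0 ^ s (Sum.inr (Sum.inl ())) *
          compositionPowSum (fun i => s (Sum.inr (Sum.inr i)) + 1) N / 2) := by
  simp only [Ssum, compositionPowSum, eval_monomial, Finsupp.prod_fintype _ _ (fun _ => pow_zero _),
    Fintype.prod_sum_type, Fintype.prod_unique, Sum.elim_inl, Sum.elim_inr, Fin.prod_univ_succ,
    Fin.cons_zero, Fin.cons_succ, pow_succ, prod_mul_distrib, PUnit.default_eq_unit]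
  simp only [mul_add, Finset.mul_sum, Finset.sum_div]
  congr 1 <;> exact Finset.sum_congr rfl fun t _ => by ring

theorem exists_even_eq_Ssum_monomial {n k : ℕ} (hk : 1 ≤ k) (s : (Fin n ⊕ (Unit ⊕ Fin k)) →₀ ℕ)
    (c : ℂ) (hs : Even (∑ v, s v)) :
    ∃ Q : MvPolynomial (Fin n ⊕ Unit) ℂ,
      (∀ y : Fin n ⊕ Unit → ℂ, eval (fun v => -y v) Q = eval y Q) ∧
      ∀ (A : Fin n → ℂ) (N : ℕ),
        eval (Sum.elim A fun _ => (N : ℂ)) Q = Ssum n k (monomial s c) A N := by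
  obtain ⟨k, rfl⟩ := Nat.exists_eq_add_of_le' hk
  set β := s (Sum.inr (Sum.inl ()))
  set γ : Fin (k + 1) → ℕ := fun i => s (Sum.inr (Sum.inr i))
  obtain ⟨w, hw, hwN⟩ := (isPolyOfParity_compositionPowSum (K := ℂ) (fun i => γ i + 1)
    fun i => Nat.succ_ne_zero _).trapezoidConv β
  set Q : MvPolynomial (Fin n ⊕ Unit) ℂ :=
    C c * (∏ i, X (Sum.inl i) ^ s (Sum.inl i)) * Polynomial.aeval (X (Sum.inr ())) w
  have hQ : ∀ y, eval y Q = c * (∏ i, y (Sum.inl i) ^ s (Sum.inl i)) * w.eval (y (Sum.inr ())) :=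
    fun y => by simp [Q, eval_aeval_X]
  refine ⟨Q, fun y => ?_, fun A N => ?_⟩
  · have hdeg : Even (∑ i, s (Sum.inl i) + (β + (∑ i, (γ i + 1) + k) + 1)) := by
      have hβ : ∑ u : Unit, s (Sum.inr (Sum.inl u)) = β := Fintype.sum_unique _
      rw [Fintype.sum_sum_type, Fintype.sum_sum_type, hβ] at hs
      rw [sum_add_distrib, sum_const, card_univ, Fintype.card_fin, smul_eq_mul, mul_one]
      simp only [Nat.even_iff, γ] at hs ⊢
      omega
    rw [hQ, hQ, hw.eval, prod_congr rfl fun i _ => neg_pow (y (Sum.inl i)) _, prod_mul_distrib,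
      prod_pow_eq_pow_sum]
    have hsign := hdeg.neg_one_pow (α := ℂ)
    rw [pow_add] at hsign
    linear_combination (c * (∏ i, y (Sum.inl i) ^ s (Sum.inl i)) * w.eval (y (Sum.inr ()))) * hsign
  · rw [hQ, Sum.elim_inr, hwN, ← compositionPowSum_cons_add_half, Ssum_monomial]
    rfl

/-- If `P(A,b,B)` is an even polynomial in `a₁,...,aₙ,b,b₁,...,b_k`, then
`S_{b,B}[P](A,N)` agrees with an even polynomial in `(a₁,...,aₙ,N)`. -/
theorem Ssum_even (n k : ℕ) (hk : 1 ≤ k) (P : MvPolynomial (Fin n ⊕ (Unit ⊕ Fin k)) ℂ)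
    (hP : ∀ x : Fin n ⊕ (Unit ⊕ Fin k) → ℂ,
      MvPolynomial.eval (fun v => -x v) P = MvPolynomial.eval x P) :
    ∃ Q : MvPolynomial (Fin n ⊕ Unit) ℂ,
      (∀ y : Fin n ⊕ Unit → ℂ, MvPolynomial.eval (fun v => -y v) Q = MvPolynomial.eval y Q) ∧
      ∀ (A : Fin n → ℂ) (N : ℕ),
        MvPolynomial.eval (Sum.elim A fun _ => (N : ℂ)) Q = Ssum n k P A N := by
  choose Q hQeven hQ using fun s (hs : s ∈ P.support) =>
    exists_even_eq_Ssum_monomial hk s (coeff s P) (even_of_mem_support hP hs)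
  refine ⟨∑ s ∈ P.support.attach, Q s s.2, fun y => ?_, fun A N => ?_⟩
  · simp only [map_sum, hQeven]
  · rw [map_sum]
    conv_rhs => rw [as_sum P, Ssum_sum, ← sum_attach]
    exact Finset.sum_congr rfl fun s _ => hQ s s.2 A N
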